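/- Let ω ∈ S_n and 1 ≤ i < j ≤ n. If m_{i,a}(ω) > m_{j,b}(ω) with a < c_i(ω) and b < c_j(ω), then m_{i,a+1}(ω) > m_{j,b+1}(ω). -/

import Mathlib

open Finset

/-! The inequality `m_{j,b} ≤ m_{i,a}` (with `i < j`, `b ≥ 1`) is equivalent to `ω i < ω j` and
`b + c_{i,j} ≤ a`: the `j`-th coordinate gives these, and conversely they bound every coordinate
`k > j` thanks to `c_{i,k} ≤ c_{i,j} + c_{j,k}`. This condition is stable under `(a, b) ↦ (a + 1, b + 1)`,
and the strictness comes from coordinate `i`, where `m_{j,b}` vanishes. -/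

/-- `c_i(ω)`: the number of `j > i` with `ω i > ω j` (the Lehmer code entries). -/
def lehmer {n : ℕ} (ω : Equiv.Perm (Fin n)) (i : Fin n) : ℕ :=
  (univ.filter fun j => i < j ∧ ω j < ω i).card

/-- `c_{i,j}(ω)`: the number of `k` with `i < k < j` and `ω i > ω k`. -/
def cij {n : ℕ} (ω : Equiv.Perm (Fin n)) (i j : Fin n) : ℕ :=
  (univ.filter fun k => i < k ∧ k < j ∧ ω k < ω i).card

/-- `m_{i,x}(ω) ∈ ℕ^n`, defined coordinatewise. -/
def mvec {n : ℕ} (ω : Equiv.Perm (Fin n)) (i : Fin n) (x : ℕ) : Fin n → ℕ :=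
  fun j => if j < i then 0 else if j = i then x
    else if ω j < ω i then 0 else x - cij ω i j

section

variable {n : ℕ} (ω : Equiv.Perm (Fin n)) {i k : Fin n} (x : ℕ)

lemma mvec_of_lt (hk : k < i) : mvec ω i x k = 0 := by
  simp [mvec, hk]

lemma mvec_self : mvec ω i x i = x := by
  simp [mvec]

lemma mvec_of_gt_of_lt (hik : i < k) (hω : ω k < ω i) : mvec ω i x k = 0 := by
  simp [mvec, hik.not_gt, hik.ne', hω]

lemma mvec_of_gt_of_not_lt (hik : i < k) (hω : ¬ ω k < ω i) :
    mvec ω i x k = x - cij ω i k := by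
  simp [mvec, hik.not_gt, hik.ne', hω]

end

lemma cij_le_cij_add_cij {n : ℕ} (ω : Equiv.Perm (Fin n)) {i j k : Fin n}
    (hjk : j < k) (hω : ω i < ω j) :
    cij ω i k ≤ cij ω i j + cij ω j k := by
  unfold cij
  refine (card_le_card fun l hl => ?_).trans (card_union_le _ _)
  simp only [mem_filter, mem_union, mem_univ, true_and] at hl ⊢
  obtain ⟨hil, hlk, hlω⟩ := hl
  rcases lt_trichotomy l j with hlj | rfl | hjl
  · exact Or.inl ⟨hil, hlj, hlω⟩
  · exact absurd hω hlω.not_gt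
  · exact Or.inr ⟨hjl, hlk, hlω.trans hω⟩

lemma lt_and_add_cij_le_of_mvec_le {n : ℕ} {ω : Equiv.Perm (Fin n)} {i j : Fin n} {a b : ℕ}
    (hij : i < j) (hb : 1 ≤ b) (h : mvec ω j b ≤ mvec ω i a) :
    ω i < ω j ∧ b + cij ω i j ≤ a := by
  have hj : mvec ω j b j ≤ mvec ω i a j := h j
  rw [mvec_self] at hj
  have hω : ω i < ω j := by
    rcases lt_trichotomy (ω i) (ω j) with hω | hω | hω
    · exact hω
    · exact absurd (ω.injective hω) hij.ne
    · rw [mvec_of_gt_of_lt ω a hij hω] at hj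
      omega
  rw [mvec_of_gt_of_not_lt ω a hij hω.not_gt] at hj
  exact ⟨hω, by omega⟩

lemma mvec_le_mvec {n : ℕ} {ω : Equiv.Perm (Fin n)} {i j : Fin n} {a b : ℕ}
    (hij : i < j) (hω : ω i < ω j) (hab : b + cij ω i j ≤ a) :
    mvec ω j b ≤ mvec ω i a := by
  intro k
  show mvec ω j b k ≤ mvec ω i a k
  rcases lt_trichotomy k j with hkj | rfl | hjk
  · simp [mvec_of_lt ω b hkj]
  · rw [mvec_self, mvec_of_gt_of_not_lt ω a hij hω.not_gt]
    omega
  · by_cases hωk : ω k < ω j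
    · simp [mvec_of_gt_of_lt ω b hjk hωk]
    · have htri := cij_le_cij_add_cij ω hjk hω
      rw [mvec_of_gt_of_not_lt ω b hjk hωk,
        mvec_of_gt_of_not_lt ω a (hij.trans hjk) fun h => hωk (h.trans hω)]
      omega

lemma mvec_lt_mvec {n : ℕ} {ω : Equiv.Perm (Fin n)} {i j : Fin n} {a b : ℕ}
    (hij : i < j) (hω : ω i < ω j) (hab : b + cij ω i j ≤ a) (ha : 0 < a) :
    mvec ω j b < mvec ω i a :=
  Pi.lt_def.2 ⟨mvec_le_mvec hij hω hab, i, by rwa [mvec_of_lt ω b hij, mvec_self]⟩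

theorem stmt8_general (n : ℕ) (ω : Equiv.Perm (Fin n)) (i j : Fin n) (a b : ℕ)
    (hij : i < j) (hb1 : 1 ≤ b)
    (h : mvec ω j b < mvec ω i a) :
    mvec ω j (b + 1) < mvec ω i (a + 1) := by
  obtain ⟨hω, hab⟩ := lt_and_add_cij_le_of_mvec_le hij hb1 h.le
  exact mvec_lt_mvec hij hω (by omega) a.succ_pos

theorem stmt8 (n : ℕ) (ω : Equiv.Perm (Fin n)) (i j : Fin n) (a b : ℕ)
    (hij : i < j) (ha1 : 1 ≤ a) (hb1 : 1 ≤ b)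
    (ha : a < lehmer ω i) (hb : b < lehmer ω j)
    (h : mvec ω j b < mvec ω i a) :
    mvec ω j (b + 1) < mvec ω i (a + 1) :=
  stmt8_general n ω i j a b hij hb1 h
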